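/- In every 2-page book embedding of the double ladder of length ℓ, for each i ∈ {0,…,ℓ−1}, each of the vertices u_i, v_i, w_i precedes each of the vertices u_{i+1}, v_{i+1}, w_{i+1} in the spine order. -/

import Mathlib

/-- A 2-page book embedding of the DAG on vertex type `V` with edge relation `E`:
a spine position function (an injective topological order) together with an
assignment of edges to two pages such that no two same-page edges cross. -/
structure TwoPageEmbedding (V : Type*) (E : V → V → Prop) where
  pos : V → ℕ
  pos_inj : Function.Injective pos
  topo : ∀ ⦃a b : V⦄, E a b → pos a < pos b
  page : V → V → Bool
  no_cross : ∀ a b c d : V, E a b → E c d → page a b = page c d →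
    ¬ (pos a < pos c ∧ pos c < pos b ∧ pos b < pos d)

/-- `a` and `b` occupy consecutive spine positions, with `a` before `b`. -/
def TwoPageEmbedding.Consec {V : Type*} {E : V → V → Prop}
    (emb : TwoPageEmbedding V E) (a b : V) : Prop :=
  emb.pos a < emb.pos b ∧
    ∀ x : V, ¬ (emb.pos a < emb.pos x ∧ emb.pos x < emb.pos b)

/-- `a` and `b` are spine-consecutive: no vertex lies strictly between them. -/
def TwoPageEmbedding.SpineConsec {V : Type*} {E : V → V → Prop}
    (emb : TwoPageEmbedding V E) (a b : V) : Prop :=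
  (∀ x : V, ¬ (emb.pos a < emb.pos x ∧ emb.pos x < emb.pos b)) ∧
  (∀ x : V, ¬ (emb.pos b < emb.pos x ∧ emb.pos x < emb.pos a))

/-- Names of the vertices of a double ladder. -/
inductive DLV : Type
  | s1 | s2 | t1 | t2
  | u (i : ℕ) | v (i : ℕ) | w (i : ℕ)

/-- Validity of a vertex name for the double ladder of length `ℓ`. -/
def DLV.valid (ℓ : ℕ) : DLV → Prop
  | .u i => i ≤ ℓ
  | .v i => i ≤ ℓ
  | .w i => i ≤ ℓ
  | _ => True

/-- The vertex set of the double ladder of length `ℓ`. -/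
def DLVert (ℓ : ℕ) : Type := {x : DLV // DLV.valid ℓ x}

def DLs1 (ℓ : ℕ) : DLVert ℓ := ⟨DLV.s1, trivial⟩
def DLs2 (ℓ : ℕ) : DLVert ℓ := ⟨DLV.s2, trivial⟩
def DLt1 (ℓ : ℕ) : DLVert ℓ := ⟨DLV.t1, trivial⟩
def DLt2 (ℓ : ℕ) : DLVert ℓ := ⟨DLV.t2, trivial⟩
def DLu (ℓ i : ℕ) (h : i ≤ ℓ) : DLVert ℓ := ⟨DLV.u i, h⟩
def DLv (ℓ i : ℕ) (h : i ≤ ℓ) : DLVert ℓ := ⟨DLV.v i, h⟩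
def DLw (ℓ i : ℕ) (h : i ≤ ℓ) : DLVert ℓ := ⟨DLV.w i, h⟩

/-- The edges of the double ladder of length `ℓ` (on vertex names). -/
inductive DLEdgeV (ℓ : ℕ) : DLV → DLV → Prop
  | s1u : DLEdgeV ℓ .s1 (.u 0)
  | s1v : DLEdgeV ℓ .s1 (.v 0)
  | s2v : DLEdgeV ℓ .s2 (.v 0)
  | s2w : DLEdgeV ℓ .s2 (.w 0)
  | ut1 : DLEdgeV ℓ (.u ℓ) .t1
  | vt1 : DLEdgeV ℓ (.v ℓ) .t1
  | vt2 : DLEdgeV ℓ (.v ℓ) .t2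
  | wt2 : DLEdgeV ℓ (.w ℓ) .t2
  | uu {i : ℕ} : i < ℓ → DLEdgeV ℓ (.u i) (.u (i + 1))
  | vu {i : ℕ} : i < ℓ → DLEdgeV ℓ (.v i) (.u (i + 1))
  | vv {i : ℕ} : i < ℓ → DLEdgeV ℓ (.v i) (.v (i + 1))
  | wv {i : ℕ} : i < ℓ → DLEdgeV ℓ (.w i) (.v (i + 1))
  | ww {i : ℕ} : i < ℓ → DLEdgeV ℓ (.w i) (.w (i + 1))

/-- The edge relation of the double ladder of length `ℓ`. -/
def DLEdge (ℓ : ℕ) (a b : DLVert ℓ) : Prop := DLEdgeV ℓ a.val b.val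

/-- Every vertex of the `i`-th triple precedes every vertex of the `j`-th triple
in the spine order of `emb`. -/
def TripleBefore {ℓ : ℕ} (emb : TwoPageEmbedding (DLVert ℓ) (DLEdge ℓ))
    (i j : ℕ) : Prop :=
  ∀ x y : DLVert ℓ,
    (x.val = DLV.u i ∨ x.val = DLV.v i ∨ x.val = DLV.w i) →
    (y.val = DLV.u j ∨ y.val = DLV.v j ∨ y.val = DLV.w j) →
    emb.pos x < emb.pos y

/-!
Two pages cannot carry three pairwise crossing edges. Suppose `b → c` is an edge,
`a` precedes `c`, `b` precedes `d`, `p → a` comes from a common in-neighbour of `a` and `b`,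
and `d → x` goes to a common out-neighbour of `c` and `d`. If `d` preceded `a`, then
`p < b < d < a < c < x`, so the edges `p → a`, `b → c`, `d → x` would pairwise cross.
In the double ladder `u i, v i` and `v i, w i` always have a common in-neighbour
(`s1`, `s2` or the previous rung) and a common out-neighbour (`t1`, `t2` or the next rung),
so this pattern orders each pair of consecutive triples that is not joined by an edge.
-/

namespace TwoPageEmbedding

variable {V : Type*} {E : V → V → Prop} (emb : TwoPageEmbedding V E)

theorem not_three_pairwise_crossing {a₁ b₁ a₂ b₂ a₃ b₃ : V}
    (h₁ : E a₁ b₁) (h₂ : E a₂ b₂) (h₃ : E a₃ b₃)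
    (o₁ : emb.pos a₁ < emb.pos a₂) (o₂ : emb.pos a₂ < emb.pos a₃)
    (o₃ : emb.pos a₃ < emb.pos b₁) (o₄ : emb.pos b₁ < emb.pos b₂)
    (o₅ : emb.pos b₂ < emb.pos b₃) : False := by
  have p₁₂ : emb.page a₁ b₁ ≠ emb.page a₂ b₂ := fun h =>
    emb.no_cross _ _ _ _ h₁ h₂ h ⟨o₁, o₂.trans o₃, o₄⟩
  have p₁₃ : emb.page a₁ b₁ ≠ emb.page a₃ b₃ := fun h =>
    emb.no_cross _ _ _ _ h₁ h₃ h ⟨o₁.trans o₂, o₃, o₄.trans o₅⟩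
  have p₂₃ : emb.page a₂ b₂ ≠ emb.page a₃ b₃ := fun h =>
    emb.no_cross _ _ _ _ h₂ h₃ h ⟨o₂, o₃.trans o₄, o₅⟩
  revert p₁₂ p₁₃ p₂₃
  cases emb.page a₁ b₁ <;> cases emb.page a₂ b₂ <;> cases emb.page a₃ b₃ <;> decide

theorem pos_lt_of_common_in_of_common_out {a b c d : V}
    (hin : ∃ p, E p a ∧ E p b) (hbc : E b c) (hout : ∃ x, E c x ∧ E d x)
    (hac : emb.pos a < emb.pos c) (hbd : emb.pos b < emb.pos d) (had : a ≠ d) :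
    emb.pos a < emb.pos d := by
  obtain ⟨p, hpa, hpb⟩ := hin
  obtain ⟨x, hcx, hdx⟩ := hout
  by_contra hda
  have hda : emb.pos d < emb.pos a :=
    (not_lt.1 hda).lt_of_ne fun h => had (emb.pos_inj h).symm
  exact emb.not_three_pairwise_crossing hpa hbc hdx (emb.topo hpb) hbd hda hac (emb.topo hcx)

end TwoPageEmbedding

section DoubleLadder

variable {ℓ : ℕ}

theorem DLEdge.exists_common_in_u_v (i : ℕ) (h : i ≤ ℓ) :
    ∃ p, DLEdge ℓ p (DLu ℓ i h) ∧ DLEdge ℓ p (DLv ℓ i h) := by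
  cases i with
  | zero => exact ⟨DLs1 ℓ, DLEdgeV.s1u, DLEdgeV.s1v⟩
  | succ j => exact ⟨DLv ℓ j (by omega), DLEdgeV.vu h, DLEdgeV.vv h⟩

theorem DLEdge.exists_common_in_v_w (i : ℕ) (h : i ≤ ℓ) :
    ∃ p, DLEdge ℓ p (DLv ℓ i h) ∧ DLEdge ℓ p (DLw ℓ i h) := by
  cases i with
  | zero => exact ⟨DLs2 ℓ, DLEdgeV.s2v, DLEdgeV.s2w⟩
  | succ j => exact ⟨DLw ℓ j (by omega), DLEdgeV.wv h, DLEdgeV.ww h⟩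

theorem DLEdge.exists_common_out_u_v (i : ℕ) (h : i ≤ ℓ) :
    ∃ x, DLEdge ℓ (DLu ℓ i h) x ∧ DLEdge ℓ (DLv ℓ i h) x := by
  rcases h.lt_or_eq with h' | rfl
  · exact ⟨DLu ℓ (i + 1) h', DLEdgeV.uu h', DLEdgeV.vu h'⟩
  · exact ⟨DLt1 i, DLEdgeV.ut1, DLEdgeV.vt1⟩

theorem DLEdge.exists_common_out_v_w (i : ℕ) (h : i ≤ ℓ) :
    ∃ x, DLEdge ℓ (DLv ℓ i h) x ∧ DLEdge ℓ (DLw ℓ i h) x := by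
  rcases h.lt_or_eq with h' | rfl
  · exact ⟨DLv ℓ (i + 1) h', DLEdgeV.vv h', DLEdgeV.wv h'⟩
  · exact ⟨DLt2 i, DLEdgeV.vt2, DLEdgeV.wt2⟩

theorem DLEdge.uu {i : ℕ} (hi : i < ℓ) : DLEdge ℓ (DLu ℓ i hi.le) (DLu ℓ (i + 1) hi) :=
  DLEdgeV.uu hi

theorem DLEdge.vu {i : ℕ} (hi : i < ℓ) : DLEdge ℓ (DLv ℓ i hi.le) (DLu ℓ (i + 1) hi) :=
  DLEdgeV.vu hi

theorem DLEdge.vv {i : ℕ} (hi : i < ℓ) : DLEdge ℓ (DLv ℓ i hi.le) (DLv ℓ (i + 1) hi) :=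
  DLEdgeV.vv hi

theorem DLEdge.wv {i : ℕ} (hi : i < ℓ) : DLEdge ℓ (DLw ℓ i hi.le) (DLv ℓ (i + 1) hi) :=
  DLEdgeV.wv hi

theorem DLEdge.ww {i : ℕ} (hi : i < ℓ) : DLEdge ℓ (DLw ℓ i hi.le) (DLw ℓ (i + 1) hi) :=
  DLEdgeV.ww hi

namespace TwoPageEmbedding

variable (emb : TwoPageEmbedding (DLVert ℓ) (DLEdge ℓ)) {i : ℕ}

theorem pos_u_lt_pos_v_succ (hi : i < ℓ) :
    emb.pos (DLu ℓ i hi.le) < emb.pos (DLv ℓ (i + 1) hi) :=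
  emb.pos_lt_of_common_in_of_common_out (DLEdge.exists_common_in_u_v i hi.le)
    (DLEdge.vu hi) (DLEdge.exists_common_out_u_v (i + 1) hi)
    (emb.topo (DLEdge.uu hi)) (emb.topo (DLEdge.vv hi))
    fun h => DLV.noConfusion (congrArg Subtype.val h)

theorem pos_v_lt_pos_w_succ (hi : i < ℓ) :
    emb.pos (DLv ℓ i hi.le) < emb.pos (DLw ℓ (i + 1) hi) :=
  emb.pos_lt_of_common_in_of_common_out (DLEdge.exists_common_in_v_w i hi.le)
    (DLEdge.wv hi) (DLEdge.exists_common_out_v_w (i + 1) hi)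
    (emb.topo (DLEdge.vv hi)) (emb.topo (DLEdge.ww hi))
    fun h => DLV.noConfusion (congrArg Subtype.val h)

theorem pos_w_lt_pos_u_succ (hi : i < ℓ) :
    emb.pos (DLw ℓ i hi.le) < emb.pos (DLu ℓ (i + 1) hi) :=
  emb.pos_lt_of_common_in_of_common_out
    ((DLEdge.exists_common_in_v_w i hi.le).imp fun _ => And.symm)
    (DLEdge.vv hi) ((DLEdge.exists_common_out_u_v (i + 1) hi).imp fun _ => And.symm)
    (emb.topo (DLEdge.wv hi)) (emb.topo (DLEdge.vu hi))
    fun h => DLV.noConfusion (congrArg Subtype.val h)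

theorem pos_u_lt_pos_w_succ (hi : i < ℓ) :
    emb.pos (DLu ℓ i hi.le) < emb.pos (DLw ℓ (i + 1) hi) :=
  emb.pos_lt_of_common_in_of_common_out (DLEdge.exists_common_in_u_v i hi.le)
    (DLEdge.vv hi) (DLEdge.exists_common_out_v_w (i + 1) hi)
    (emb.pos_u_lt_pos_v_succ hi) (emb.pos_v_lt_pos_w_succ hi)
    fun h => DLV.noConfusion (congrArg Subtype.val h)

end TwoPageEmbedding

end DoubleLadder

/-- in every 2-page book embedding of the double ladder of length
`ℓ`, for each `i < ℓ`, each of `u i, v i, w i` precedes each of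
`u (i+1), v (i+1), w (i+1)` in the spine order. -/
theorem doubleLadder_triples_ordered (ℓ : ℕ)
    (emb : TwoPageEmbedding (DLVert ℓ) (DLEdge ℓ)) :
    ∀ i : ℕ, i < ℓ → TripleBefore emb i (i + 1) := by
  rintro i hi ⟨x, hx⟩ ⟨y, hy⟩ hxi hyi
  rcases hxi with rfl | rfl | rfl <;> rcases hyi with rfl | rfl | rfl
  · exact emb.topo (DLEdge.uu hi)
  · exact emb.pos_u_lt_pos_v_succ hi
  · exact emb.pos_u_lt_pos_w_succ hi
  · exact emb.topo (DLEdge.vu hi)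
  · exact emb.topo (DLEdge.vv hi)
  · exact emb.pos_v_lt_pos_w_succ hi
  · exact emb.pos_w_lt_pos_u_succ hi
  · exact emb.topo (DLEdge.wv hi)
  · exact emb.topo (DLEdge.ww hi)
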